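/- Define h(R,ε) = (R+ε)^d · B_{1-R²/(R+ε)²}((d-1)/2, (d+1)/2)/B((d-1)/2, 1/2) - R^d · I_{1-R²/(R+ε)²}((d-1)/2, 1/2), where B_x(a,b) is the incomplete beta function and I_x(a,b) = B_x(a,b)/B(a,b). Then for every fixed ε > 0 and integer d ≥ 2, h(R,ε) → ∞ as R → ∞. -/

import Mathlib

open Real Filter

/-- Incomplete beta function `B_x(a,b) = ∫₀^x t^(a-1) (1-t)^(b-1) dt`. -/
noncomputable def incBeta (x a b : ℝ) : ℝ :=
  ∫ t in (0:ℝ)..x, t ^ (a - 1) * (1 - t) ^ (b - 1)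

/-- Regularized incomplete beta function `I_x(a,b) = B_x(a,b)/B(a,b)`. -/
noncomputable def regBeta (x a b : ℝ) : ℝ := incBeta x a b / incBeta 1 a b

noncomputable def h (d : ℕ) (R eps : ℝ) : ℝ :=
  (R + eps) ^ d * incBeta (1 - R ^ 2 / (R + eps) ^ 2) (((d : ℝ) - 1) / 2) (((d : ℝ) + 1) / 2)
      / incBeta 1 (((d : ℝ) - 1) / 2) (1 / 2)
    - R ^ d * regBeta (1 - R ^ 2 / (R + eps) ^ 2) (((d : ℝ) - 1) / 2) (1 / 2)

/-!
Write `a = (d-1)/2`, `S = (R+ε)²`, `r = R²` and `x = 1 - r/S`. The numerator of `h` is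
`∫₀ˣ t^(a-1) (1-t)^(-1/2) ((S(1-t))^(d/2) - r^(d/2)) dt`. Convexity of `y ↦ y^(d/2)` bounds the
bracket below by `(d/2) r^(d/2-1) S (x - t)`, and `(1-t)^(-1/2) ≥ 1`, so the numerator is at least
a constant times `R^(d-2) S x^(a+1)`. Since `x ≍ ε/R`, this grows like `R^((d-1)/2)`.
-/

open MeasureTheory intervalIntegral

lemma intervalIntegrable_rpow_mul_one_sub_rpow {p q x : ℝ} (hp : -1 < p) (hx : x < 1) :
    IntervalIntegrable (fun t => t ^ p * (1 - t) ^ q) volume 0 x :=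
  (intervalIntegrable_rpow' hp).mul_continuousOn <|
    (continuousOn_const.sub continuousOn_id).rpow_const fun _ ht =>
      Or.inl (sub_pos.2 (ht.2.trans_lt (max_lt one_pos hx))).ne'

lemma intervalIntegrable_rpow_mul_one_sub_rpow_zero_one {p q : ℝ} (hp : -1 < p) (hq : -1 < q) :
    IntervalIntegrable (fun t => t ^ p * (1 - t) ^ q) volume 0 1 := by
  have hhalf : (1 / 2 : ℝ) < 1 := by norm_num
  have hright := ((intervalIntegrable_rpow_mul_one_sub_rpow (q := p) hq hhalf).comp_sub_left 1).symm
  norm_num at hright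
  refine (intervalIntegrable_rpow_mul_one_sub_rpow hp hhalf).trans (hright.congr fun t _ => ?_)
  exact mul_comm _ _

lemma incBeta_one_pos {a b : ℝ} (ha : 0 < a) (hb : 0 < b) : 0 < incBeta 1 a b :=
  intervalIntegral_pos_of_pos_on
    (intervalIntegrable_rpow_mul_one_sub_rpow_zero_one (by linarith) (by linarith))
    (fun t ht => mul_pos (rpow_pos_of_pos ht.1 _) (rpow_pos_of_pos (sub_pos.2 ht.2) _)) one_pos

lemma mul_rpow_sub_one_mul_sub_le_rpow_sub_rpow {p y z : ℝ} (hp : 1 ≤ p) (hy : 0 ≤ y)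
    (hz : 0 < z) : p * z ^ (p - 1) * (y - z) ≤ y ^ p - z ^ p := by
  have hbern := one_add_mul_self_le_rpow_one_add
    (by linarith [div_nonneg hy hz.le] : -1 ≤ y / z - 1) hp
  rw [add_sub_cancel, div_rpow hy hz.le] at hbern
  rw [rpow_sub_one hz.ne']
  have hzp := rpow_pos_of_pos hz p
  rw [le_div_iff₀ hzp] at hbern
  calc p * (z ^ p / z) * (y - z) = (1 + p * (y / z - 1)) * z ^ p - z ^ p := by
        field_simp; ring
    _ ≤ y ^ p - z ^ p := by linarith

lemma le_rpow_mul_rpow_sub_rpow_mul_rpow {a r S w : ℝ} (ha : 1 / 2 ≤ a) (hr : 0 < r)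
    (hw : 0 < w) (hw1 : w ≤ 1) (hrw : r ≤ S * w) :
    (a + 1 / 2) * r ^ (a - 1 / 2) * (S * w - r) ≤
      S ^ (a + 1 / 2) * w ^ a - r ^ (a + 1 / 2) * w ^ (-(1 / 2) : ℝ) := by
  have hS : 0 < S := pos_of_mul_pos_left (hr.trans_le hrw) hw.le
  have hsplit : S ^ (a + 1 / 2) * w ^ a - r ^ (a + 1 / 2) * w ^ (-(1 / 2) : ℝ) =
      w ^ (-(1 / 2) : ℝ) * ((S * w) ^ (a + 1 / 2) - r ^ (a + 1 / 2)) := by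
    rw [mul_rpow hS.le hw.le, mul_sub, ← mul_assoc, mul_comm _ (S ^ _), mul_assoc,
      ← rpow_add hw]
    ring_nf
  have htangent := mul_rpow_sub_one_mul_sub_le_rpow_sub_rpow (by linarith : 1 ≤ a + 1 / 2)
    (mul_pos hS hw).le hr
  rw [show a + 1 / 2 - 1 = a - 1 / 2 by ring] at htangent
  have hgap : 0 ≤ (S * w) ^ (a + 1 / 2) - r ^ (a + 1 / 2) :=
    sub_nonneg.2 (rpow_le_rpow hr.le hrw (by linarith))
  rw [hsplit]
  exact htangent.trans
    (le_mul_of_one_le_left hgap (one_le_rpow_of_pos_of_le_one_of_nonpos hw hw1 (by norm_num)))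

lemma integral_rpow_mul_sub {a x : ℝ} (ha : 0 < a) (hx : 0 ≤ x) :
    ∫ t in (0:ℝ)..x, t ^ (a - 1) * (x - t) = x ^ (a + 1) / (a * (a + 1)) := by
  have hcongr : ∫ t in (0:ℝ)..x, t ^ (a - 1) * (x - t) =
      ∫ t in (0:ℝ)..x, (x * t ^ (a - 1) - t ^ a) := by
    refine integral_congr fun t ht => ?_
    have ht0 : 0 ≤ t := by simpa [hx] using ht.1
    rw [mul_sub, mul_comm, ← rpow_add_one' ht0 (by linarith), sub_add_cancel]
  rw [hcongr, integral_sub ((intervalIntegrable_rpow' (by linarith)).const_mul x)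
    (intervalIntegrable_rpow' (by linarith)),
    intervalIntegral.integral_const_mul, integral_rpow (Or.inl (by linarith)),
    integral_rpow (Or.inl (by linarith)), sub_add_cancel, zero_rpow ha.ne', zero_rpow (by linarith),
    rpow_add_one' hx (by linarith)]
  field_simp
  ring

lemma le_rpow_mul_incBeta_sub_rpow_mul_incBeta {a r S : ℝ} (ha : 1 / 2 ≤ a) (hr : 0 < r)
    (hrS : r ≤ S) :
    (a + 1 / 2) * (r ^ (a - 1 / 2) * S * (1 - r / S) ^ (a + 1)) / (a * (a + 1)) ≤
      S ^ (a + 1 / 2) * incBeta (1 - r / S) a (a + 1) -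
        r ^ (a + 1 / 2) * incBeta (1 - r / S) a (1 / 2) := by
  have hS : 0 < S := hr.trans_le hrS
  set x := 1 - r / S with hx
  have hx0 : 0 ≤ x := sub_nonneg.2 ((div_le_one hS).2 hrS)
  have hx1 : x < 1 := sub_lt_self 1 (div_pos hr hS)
  have ha₁ : -1 < a - 1 := by linarith
  have hB₁ := intervalIntegrable_rpow_mul_one_sub_rpow (q := a + 1 - 1) ha₁ hx1
  have hB₂ := intervalIntegrable_rpow_mul_one_sub_rpow (q := (1 : ℝ) / 2 - 1) ha₁ hx1
  calc _ = ∫ t in (0:ℝ)..x, (a + 1 / 2) * r ^ (a - 1 / 2) * S * (t ^ (a - 1) * (x - t)) := by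
        rw [intervalIntegral.integral_const_mul, integral_rpow_mul_sub (by linarith) hx0]
        ring
    _ ≤ ∫ t in (0:ℝ)..x, (S ^ (a + 1 / 2) * (t ^ (a - 1) * (1 - t) ^ (a + 1 - 1)) -
          r ^ (a + 1 / 2) * (t ^ (a - 1) * (1 - t) ^ ((1 : ℝ) / 2 - 1))) := by
        refine integral_mono_on hx0 (((intervalIntegrable_rpow' ha₁).mul_continuousOn
          (continuousOn_const.sub continuousOn_id)).const_mul _)
          ((hB₁.const_mul _).sub (hB₂.const_mul _)) fun t ht => ?_
        have hw : 0 < 1 - t := by linarith [ht.2]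
        have hbound := le_rpow_mul_rpow_sub_rpow_mul_rpow ha hr hw (by linarith [ht.1])
          (show r ≤ S * (1 - t) by rw [hx] at ht; have := ht.2; field_simp at this ⊢; linarith)
        rw [show S * (1 - t) - r = S * (x - t) by rw [hx]; field_simp; ring] at hbound
        rw [add_sub_cancel_right, show (1 / 2 - 1 : ℝ) = -(1 / 2) by norm_num]
        linarith [mul_le_mul_of_nonneg_left hbound (rpow_nonneg ht.1 (a - 1))]
    _ = _ := by
        rw [integral_sub (hB₁.const_mul _) (hB₂.const_mul _), intervalIntegral.integral_const_mul,
          intervalIntegral.integral_const_mul, incBeta, incBeta]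

lemma tendsto_sq_rpow_mul_sq_mul_one_sub_div_rpow_atTop {a ε : ℝ} (ha : 0 < a) (hε : 0 < ε) :
    Tendsto (fun R : ℝ =>
      (R ^ 2) ^ (a - 1 / 2) * (R + ε) ^ 2 * (1 - R ^ 2 / (R + ε) ^ 2) ^ (a + 1)) atTop atTop := by
  have hlim : Tendsto (fun R : ℝ => 2 * ε * (ε / 2 * R) ^ a) atTop atTop :=
    ((tendsto_rpow_atTop ha).comp (tendsto_id.const_mul_atTop (by positivity))).const_mul_atTop
      (by positivity)
  refine tendsto_atTop_mono' atTop ?_ hlim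
  filter_upwards [eventually_ge_atTop ε] with R hR
  have hR0 : 0 < R := hε.trans_le hR
  set x := 1 - R ^ 2 / (R + ε) ^ 2 with hx
  have hsx : (R + ε) ^ 2 * x = ε * (2 * R + ε) := by rw [hx]; field_simp; ring
  have hx0 : 0 < x := sub_pos.2 ((div_lt_one (by positivity)).2 (by nlinarith))
  have hRx : ε / 2 * R ≤ R ^ 2 * x := by
    rw [hx]
    field_simp
    nlinarith [mul_le_mul_of_nonneg_left (mul_le_mul hR hR hε.le hR0.le) hε.le]
  have hsplit : (R ^ 2) ^ (a - 1 / 2) * (R + ε) ^ 2 * x ^ (a + 1) =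
      (R ^ 2 * x) ^ a * ((R + ε) ^ 2 * x / R) := by
    rw [rpow_sub (by positivity), mul_rpow (by positivity) hx0.le, rpow_add_one hx0.ne',
      ← sqrt_eq_rpow, sqrt_sq hR0.le]
    field_simp
  rw [hsplit, mul_comm]
  gcongr
  rw [hsx, le_div_iff₀ hR0]
  nlinarith

lemma pow_eq_sq_rpow_half {y : ℝ} (hy : 0 ≤ y) (d : ℕ) : y ^ d = (y ^ 2) ^ ((d : ℝ) / 2) := by
  rw [← rpow_natCast_mul hy, Nat.cast_ofNat, mul_div_cancel₀ _ two_ne_zero, rpow_natCast]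

theorem stmt16 (d : ℕ) (hd : 2 ≤ d) (eps : ℝ) (heps : 0 < eps) :
    Tendsto (fun R => h d R eps) atTop atTop := by
  obtain ⟨a, ha⟩ : ∃ a : ℝ, ((d : ℝ) - 1) / 2 = a := ⟨_, rfl⟩
  have ha₂ : 1 / 2 ≤ a := by
    have : (2 : ℝ) ≤ d := by exact_mod_cast hd
    linarith
  have hd₁ : ((d : ℝ) + 1) / 2 = a + 1 := by rw [← ha]; ring
  have hd₂ : (d : ℝ) / 2 = a + 1 / 2 := by rw [← ha]; ring
  have hC := incBeta_one_pos (by linarith : 0 < a) one_half_pos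
  have hlim := tendsto_sq_rpow_mul_sq_mul_one_sub_div_rpow_atTop (a := a) (by linarith) heps
  refine tendsto_atTop_mono' atTop ?_ <|
    ((hlim.const_mul_atTop (by linarith : 0 < a + 1 / 2)).atTop_div_const
      (by positivity : 0 < a * (a + 1))).atTop_div_const hC
  filter_upwards [eventually_gt_atTop 0] with R hR
  have hRs : R ≤ R + eps := le_add_of_nonneg_right heps.le
  have hbound := le_rpow_mul_incBeta_sub_rpow_mul_incBeta ha₂ (pow_pos hR 2)
    (pow_le_pow_left₀ hR.le hRs 2)
  rw [h, regBeta, ha, hd₁, pow_eq_sq_rpow_half hR.le d, pow_eq_sq_rpow_half (hR.le.trans hRs) d,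
    hd₂, mul_div_assoc', ← sub_div]
  exact div_le_div_of_nonneg_right hbound hC.le
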